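/- For n ≥ 5, if H is a nontrivial subgroup of Sₙ that is a modular element of the subgroup lattice Sub(Sₙ), then H ⊇ Aₙ (i.e., H = Aₙ or H = Sₙ). -/

import Mathlib

/-!
The modular law is used in one shape only: for `x ∈ H` and any `g`, the subgroup
`K = closure {g, x * g * x⁻¹}` lies below `H ⊔ zpowers g`, hence `K = (H ⊓ K) ⊔ zpowers g`,
and `H` meets `K` outside every subgroup that contains `g` but not `x * g * x⁻¹`. With `g` a
transposition or a product of two disjoint transpositions, `K` is a symmetric group on three
points or a Klein four-group. These moves produce a 3-cycle in `H` from any nontrivial element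
(this is where five points are needed), and then a 3-cycle on every triple of points; such
3-cycles generate the alternating group.
-/

open Equiv Equiv.Perm Subgroup

def IsModularElement {L : Type*} [Lattice L] (a : L) : Prop :=
  ∀ y z : L, y ≤ z → (a ⊔ y) ⊓ z = (a ⊓ z) ⊔ y

section Group

variable {G : Type*} [Group G]

theorem Subgroup.closure_pair_subset_of_commute {g k : G} (hg : g * g = 1) (hk : k * k = 1)
    (hc : Commute g k) : (closure {g, k} : Set G) ⊆ {1, g, k, g * k} := by
  have hkg : k * g = g * k := hc.eq.symm
  intro z hz
  induction hz using closure_induction with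
  | mem z hz => rcases hz with rfl | rfl <;> simp
  | one => simp
  | mul x y _ _ hx hy =>
    simp only [Set.mem_insert_iff, Set.mem_singleton_iff] at hx hy
    rcases hx with hx | hx | hx | hx <;> rcases hy with hy | hy | hy | hy <;> subst x y <;>
      simp [mul_assoc, hg, hk, hkg, ← mul_assoc k g, ← mul_assoc g g]
  | inv x _ hx =>
    simp only [Set.mem_insert_iff, Set.mem_singleton_iff] at hx
    rcases hx with hx | hx | hx | hx <;> subst x <;>
      simp [inv_eq_of_mul_eq_one_right hg, inv_eq_of_mul_eq_one_right hk, hkg]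

namespace IsModularElement

variable {H : Subgroup G}

theorem exists_mem_closure_pair_notMem (hH : IsModularElement H) {x g : G} {L : Subgroup G}
    (hx : x ∈ H) (hg : g ∈ L) (hgx : x * g * x⁻¹ ∉ L) :
    ∃ h ∈ H, h ∈ closure {g, x * g * x⁻¹} ∧ h ∉ L := by
  by_contra! hcon
  have hg' : g ∈ H ⊔ zpowers g := mem_sup_right (mem_zpowers g)
  have hK : closure {g, x * g * x⁻¹} ≤ H ⊔ zpowers g := by
    rw [closure_le, Set.insert_subset_iff, Set.singleton_subset_iff]
    exact ⟨hg', mul_mem (mul_mem (mem_sup_left hx) hg') (inv_mem (mem_sup_left hx))⟩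
  have hmod := hH (zpowers g) (closure {g, x * g * x⁻¹})
    (zpowers_le.2 (subset_closure (Set.mem_insert g _)))
  rw [inf_eq_right.2 hK] at hmod
  have hKL : closure {g, x * g * x⁻¹} ≤ L :=
    hmod ▸ sup_le (fun h hh => hcon h hh.1 hh.2) (zpowers_le.2 hg)
  exact hgx (hKL (subset_closure (by simp)))

theorem conj_mem_or_mul_conj_mem (hH : IsModularElement H) {x g : G} (hx : x ∈ H)
    (hg : g * g = 1) (hc : Commute g (x * g * x⁻¹)) (hne : x * g * x⁻¹ ≠ g) :
    x * g * x⁻¹ ∈ H ∨ g * (x * g * x⁻¹) ∈ H := by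
  have hk : x * g * x⁻¹ * (x * g * x⁻¹) = 1 := by
    simp [mul_assoc, ← mul_assoc g g, hg]
  have hzpowers : (zpowers g : Set G) ⊆ {1, g} := by
    have hg2 : g ^ 2 = 1 := by rw [sq, hg]
    rintro _ ⟨m, rfl⟩
    rcases Int.even_or_odd' m with ⟨j, rfl | rfl⟩ <;> simp [zpow_add, zpow_mul, hg2]
  have hnotMem : x * g * x⁻¹ ∉ zpowers g := fun h => by
    rcases hzpowers h with h | h
    · exact hne (by rw [h, eq_comm, ← conj_eq_one_iff (a := x), h])
    · exact hne h
  obtain ⟨h, hhH, hhK, hh⟩ := hH.exists_mem_closure_pair_notMem hx (mem_zpowers g) hnotMem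
  rcases closure_pair_subset_of_commute hg hk hc hhK with rfl | rfl | rfl | rfl
  · exact absurd (one_mem _) hh
  · exact absurd (mem_zpowers _) hh
  · exact Or.inl hhH
  · exact Or.inr hhH

end IsModularElement

end Group

theorem Fintype.exists_ne_of_five_le_card {α : Type*} [DecidableEq α] [Fintype α]
    (hα : 5 ≤ Fintype.card α) (a b c d : α) :
    ∃ e, e ≠ a ∧ e ≠ b ∧ e ≠ c ∧ e ≠ d := by
  have hcard : ({a, b, c, d} : Finset α).card < (Finset.univ : Finset α).card :=
    calc ({a, b, c, d} : Finset α).card ≤ ({b, c, d} : Finset α).card + 1 :=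
          Finset.card_insert_le _ _
      _ < Fintype.card α := by have := Finset.card_le_three (a := b) (b := c) (c := d); omega
  obtain ⟨e, -, he⟩ := Finset.exists_mem_notMem_of_card_lt_card hcard
  exact ⟨e, by simpa only [Finset.mem_insert, Finset.mem_singleton, not_or] using he⟩

section Perm

variable {α : Type*} [DecidableEq α] {H : Subgroup (Perm α)} {a b c : α}

namespace IsModularElement

theorem swap_mem_of_swap_mem (hH : IsModularElement H) {d : α} (hab : a ≠ b) (hac : a ≠ c)
    (had : a ≠ d) (hbc : b ≠ c) (hbd : b ≠ d) (hcd : c ≠ d) (h : swap a b ∈ H) :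
    swap c d ∈ H := by
  have hρ : swap a b * (swap a c * swap b d) * (swap a b)⁻¹ = swap b c * swap a d := by
    ext t; simp only [Perm.mul_apply, swap_inv, swap_apply_def]; grind
  have hg : swap a c * swap b d * (swap a c * swap b d) = 1 := by
    ext t; simp only [Perm.mul_apply, Perm.one_apply, swap_apply_def]; grind
  have hc : Commute (swap a c * swap b d) (swap b c * swap a d) := by
    ext t; simp only [Perm.mul_apply, swap_apply_def]; grind
  have hne : swap b c * swap a d ≠ swap a c * swap b d := fun h => by
    have := congr($h a); simp only [Perm.mul_apply, swap_apply_def] at this; grind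
  have hprod : swap a c * swap b d * (swap b c * swap a d) = swap a b * swap c d := by
    ext t; simp only [Perm.mul_apply, swap_apply_def]; grind
  rcases hH.conj_mem_or_mul_conj_mem h hg (hρ ▸ hc) (hρ ▸ hne) with h' | h'
  · rw [hρ] at h'
    have := mul_mem (mul_mem h' h) (inv_mem h')
    rw [← swap_apply_apply] at this
    convert this using 1
    ext t; simp only [Perm.mul_apply, swap_apply_def]; grind
  · rw [hρ, hprod] at h'
    simpa using mul_mem h h'

theorem swap_mem_or_mul_swap_mem (hH : IsModularElement H) {x : Perm α} (hx : x ∈ H)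
    (ha : a ≠ x a) (hac : a ≠ c) (haxc : a ≠ x c) (hxac : x a ≠ c) (hc : c ≠ x c) :
    swap (x a) (x c) ∈ H ∨ swap a c * swap (x a) (x c) ∈ H := by
  have hxaxc : x a ≠ x c := fun h => hac (x.injective h)
  have hcomm : Commute (swap a c) (swap (x a) (x c)) := by
    ext t; simp only [Perm.mul_apply, swap_apply_def]; grind
  have hne : swap (x a) (x c) ≠ swap a c := fun h => by
    have := congr($h a); simp only [swap_apply_def] at this; grind
  rw [swap_apply_apply] at hcomm hne ⊢
  exact hH.conj_mem_or_mul_conj_mem hx (swap_mul_self a c) hcomm hne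

end IsModularElement

variable [Fintype α]

theorem Equiv.Perm.isThreeCycle_swap_mul_swap (hab : a ≠ b) (hac : a ≠ c)
    (hbc : b ≠ c) : (swap a b * swap b c).IsThreeCycle := by
  rw [← card_support_eq_three_iff, support_swap_mul_swap (by simp [*])]
  exact Finset.card_eq_three.2 ⟨a, b, c, hab, hac, hbc, rfl⟩

theorem Equiv.Perm.IsThreeCycle.eq_of_apply_eq {σ τ : Perm α} (hσ : σ.IsThreeCycle)
    (hτ : τ.IsThreeCycle) (hs : σ.support = τ.support) {a : α} (ha : a ∈ σ.support)
    (h : σ a = τ a) : σ = τ := by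
  have hτa : a ∈ τ.support := hs ▸ ha
  have hmem : τ (τ a) ∈ σ.support := hs ▸ apply_mem_support.2 (apply_mem_support.2 hτa)
  have hσn := hσ.nodup_iff_mem_support.2 ha
  have hτn := hτ.nodup_iff_mem_support.2 hτa
  rw [hσ.support_eq_iff_mem_support.2 ha] at hmem
  simp only [List.nodup_cons, List.mem_cons, List.not_mem_nil, or_false] at hσn hτn
  simp only [Finset.mem_insert, Finset.mem_singleton] at hmem
  have h2 : σ (σ a) = τ (τ a) := by grind
  rw [hσ.eq_swap_mul_swap_iff_mem_support.2 ha, hτ.eq_swap_mul_swap_iff_mem_support.2 hτa, h2, h]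

theorem Equiv.Perm.IsThreeCycle.eq_or_eq_inv_of_support_eq {σ τ : Perm α}
    (hσ : σ.IsThreeCycle) (hτ : τ.IsThreeCycle) (hs : σ.support = τ.support) :
    τ = σ ∨ τ = σ⁻¹ := by
  obtain ⟨a, ha⟩ := Finset.card_pos.1 (hσ.card_support.symm ▸ three_pos)
  by_cases h : σ a = τ a
  · exact Or.inl (hσ.eq_of_apply_eq hτ hs ha h).symm
  obtain ⟨e1, e2⟩ : τ a = σ (σ a) ∧ τ (τ a) = σ a := by
    have hτa : a ∈ τ.support := hs ▸ ha
    have h1 : τ a ∈ σ.support := hs ▸ apply_mem_support.2 hτa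
    have h2 : τ (τ a) ∈ σ.support := hs ▸ apply_mem_support.2 (apply_mem_support.2 hτa)
    have hσn := hσ.nodup_iff_mem_support.2 ha
    have hτn := hτ.nodup_iff_mem_support.2 hτa
    rw [hσ.support_eq_iff_mem_support.2 ha] at h1 h2
    simp only [List.nodup_cons, List.mem_cons, List.not_mem_nil, or_false] at hσn hτn
    simp only [Finset.mem_insert, Finset.mem_singleton] at h1 h2
    constructor <;> grind
  refine Or.inr (hσ.inv.eq_of_apply_eq hτ (by rwa [support_inv]) (a := τ a) ?_ ?_).symm
  · rw [support_inv, e1]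
    exact apply_mem_support.2 (apply_mem_support.2 ha)
  · rw [e2, e1, Perm.inv_eq_iff_eq]

theorem Equiv.Perm.isThreeCycle_or_eq_swap_of_support_subset {h : Perm α} {u v w : α}
    (hsupp : h.support ⊆ {u, v, w}) (hw : w ∈ h.support) :
    (h.IsThreeCycle ∧ h.support = {u, v, w}) ∨ h = swap u w ∨ h = swap v w := by
  have hcard : h.support.card ≤ 3 := (Finset.card_le_card hsupp).trans Finset.card_le_three
  have hcard0 : h.support.card ≠ 0 := Finset.card_ne_zero_of_mem hw
  have hcard1 := card_support_ne_one h
  obtain h2 | h3 : h.support.card = 2 ∨ h.support.card = 3 := by omega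
  · obtain ⟨y, z, hyz, rfl⟩ := card_support_eq_two.1 h2
    rw [support_swap hyz] at hsupp hw
    simp only [Finset.insert_subset_iff, Finset.singleton_subset_iff, Finset.mem_insert,
      Finset.mem_singleton] at hsupp hw
    right
    rcases hw with rfl | rfl
    · rw [swap_comm]
      rcases hsupp.2 with rfl | rfl | rfl
      exacts [Or.inl rfl, Or.inr rfl, absurd rfl hyz]
    · rcases hsupp.1 with rfl | rfl | rfl
      exacts [Or.inl rfl, Or.inr rfl, absurd rfl hyz]
  · exact Or.inl ⟨card_support_eq_three_iff.1 h3,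
      Finset.eq_of_subset_of_card_le hsupp (h3 ▸ Finset.card_le_three)⟩

def HasThreeCycleOn (H : Subgroup (Perm α)) (s : Finset α) : Prop :=
  ∃ σ ∈ H, σ.IsThreeCycle ∧ σ.support = s

theorem hasThreeCycleOn_of_swap_mul_swap_mem (hab : a ≠ b) (hac : a ≠ c) (hbc : b ≠ c)
    (h : swap a b * swap b c ∈ H) : HasThreeCycleOn H {a, b, c} :=
  ⟨_, h, isThreeCycle_swap_mul_swap hab hac hbc, support_swap_mul_swap (by simp [*])⟩

namespace HasThreeCycleOn

theorem mem {s : Finset α} (hs : HasThreeCycleOn H s) {τ : Perm α} (hτ : τ.IsThreeCycle)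
    (hτs : τ.support = s) : τ ∈ H := by
  obtain ⟨σ, hσH, hσ, rfl⟩ := hs
  rcases hσ.eq_or_eq_inv_of_support_eq hτ hτs.symm with rfl | rfl
  exacts [hσH, inv_mem hσH]

theorem swap_mul_swap_mem (hs : HasThreeCycleOn H {a, b, c}) (hab : a ≠ b) (hac : a ≠ c)
    (hbc : b ≠ c) : swap a b * swap b c ∈ H :=
  hs.mem (isThreeCycle_swap_mul_swap hab hac hbc) (support_swap_mul_swap (by simp [*]))

theorem conj (hs : HasThreeCycleOn H {a, b, c}) {x : Perm α} (hx : x ∈ H) :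
    HasThreeCycleOn H {x a, x b, x c} := by
  obtain ⟨σ, hσH, hσ, hσs⟩ := hs
  refine ⟨x * σ * x⁻¹, mul_mem (mul_mem hx hσH) (inv_mem hx), cycleType_conj.trans hσ, ?_⟩
  simp [support_conj, hσs]

theorem of_sharing_pair {u v : α} (h₁ : HasThreeCycleOn H {a, b, u})
    (h₂ : HasThreeCycleOn H {a, b, v}) (hab : a ≠ b) (hau : a ≠ u) (hav : a ≠ v)
    (hbu : b ≠ u) (hbv : b ≠ v) (huv : u ≠ v) : HasThreeCycleOn H {a, u, v} := by
  have hσ : swap a v * swap v b ∈ H := by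
    rw [Finset.pair_comm] at h₂
    exact h₂.swap_mul_swap_mem hav hab hbv.symm
  have h := h₁.conj hσ
  simp only [Perm.mul_apply, swap_apply_left, swap_apply_right, swap_apply_of_ne_of_ne hav hab,
    swap_apply_of_ne_of_ne huv hbu.symm, swap_apply_of_ne_of_ne hau.symm huv] at h
  rwa [Finset.insert_comm, Finset.pair_comm] at h

end HasThreeCycleOn

namespace IsModularElement

theorem hasThreeCycleOn_or_swap_mem (hH : IsModularElement H) {x : Perm α} (hx : x ∈ H)
    {u v w : α} (huv : u ≠ v) (huw : u ≠ w) (hvw : v ≠ w)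
    (hρ : swap (x u) (x v) = swap v w) :
    HasThreeCycleOn H {u, v, w} ∨ swap u w ∈ H ∨ swap v w ∈ H := by
  rw [swap_apply_apply] at hρ
  obtain ⟨h, hhH, hhK, hhw⟩ := hH.exists_mem_closure_pair_notMem (g := swap u v)
    (L := MulAction.stabilizer _ w) hx
    (by rw [MulAction.mem_stabilizer_iff, Perm.smul_def,
      swap_apply_of_ne_of_ne huw.symm hvw.symm])
    (by rw [hρ, MulAction.mem_stabilizer_iff, Perm.smul_def, swap_apply_right]; exact hvw)
  have hw : w ∈ h.support := mem_support.2 (by simpa [MulAction.mem_stabilizer_iff] using hhw)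
  have hsupp : h.support ⊆ {u, v, w} := by
    have := support_closure_subset_union _ h hhK
    rw [Set.biUnion_pair, hρ, support_swap huv, support_swap hvw, ← Finset.coe_union,
      Finset.coe_subset] at this
    refine this.trans fun t => ?_
    simp only [Finset.mem_union, Finset.mem_insert, Finset.mem_singleton]
    tauto
  rcases isThreeCycle_or_eq_swap_of_support_subset hsupp hw with ⟨h3, hs⟩ | rfl | rfl
  exacts [Or.inl ⟨h, hhH, h3, hs⟩, Or.inr (Or.inl hhH), Or.inr (Or.inr hhH)]

end IsModularElement

namespace HasThreeCycleOn

theorem exchange (hH : IsModularElement H) {p q r d : α} (hs : HasThreeCycleOn H {p, q, r})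
    (hpq : p ≠ q) (hpr : p ≠ r) (hqr : q ≠ r) (hdp : d ≠ p) (hdq : d ≠ q) :
    HasThreeCycleOn H {p, q, d} := by
  rcases eq_or_ne d r with rfl | hdr
  · exact hs
  have hσ := hs.swap_mul_swap_mem hpq hpr hqr
  have hσp : (swap p q * swap q r) p = q := by simp [swap_apply_of_ne_of_ne hpq hpr]
  have hσq : (swap p q * swap q r) q = r := by simp [swap_apply_of_ne_of_ne hpr.symm hqr.symm]
  have hσd : (swap p q * swap q r) d = d := by
    simp [swap_apply_of_ne_of_ne hdq hdr, swap_apply_of_ne_of_ne hdp hdq]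
  rcases hH.hasThreeCycleOn_or_swap_mem hσ hdp.symm hpq hdq (by rw [hσp, hσd, swap_comm])
    with h | h | h
  · rwa [Finset.pair_comm]
  · have hqr' : swap q r ∈ H := by
      have := mul_mem (mul_mem hσ h) (inv_mem hσ)
      rwa [← swap_apply_apply, hσp, hσq] at this
    have hrd : swap r d ∈ H := hH.swap_mem_of_swap_mem hpq hpr hdp.symm hqr hdq.symm hdr.symm h
    have h' := hasThreeCycleOn_of_swap_mul_swap_mem hqr hdq.symm hdr.symm (mul_mem hqr' hrd)
    rw [Finset.insert_comm, Finset.pair_comm] at hs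
    rw [Finset.insert_comm]
    exact hs.of_sharing_pair h' hqr hpq.symm hdq.symm hpr.symm hdr.symm hdp.symm
  · have h' := hs.conj h
    rw [swap_apply_of_ne_of_ne hdp.symm hpq, swap_apply_right,
      swap_apply_of_ne_of_ne hdr.symm hqr.symm, Finset.pair_comm] at h'
    rw [Finset.pair_comm] at hs
    exact hs.of_sharing_pair h' hpr hpq hdp.symm hqr.symm hdr.symm hdq.symm

theorem of_card_eq_three (hH : IsModularElement H) {s t : Finset α} (hs : HasThreeCycleOn H s)
    (ht : t.card = 3) : HasThreeCycleOn H t := by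
  have pivot : ∀ {x y z : α}, HasThreeCycleOn H {x, y, z} → x ≠ y → x ≠ z → y ≠ z →
      ∀ {y' z' : α}, x ≠ y' → x ≠ z' → y' ≠ z' → HasThreeCycleOn H {x, y', z'} := by
    intro x y z h hxy hxz hyz y' z' hxy' hxz' hyz'
    rcases eq_or_ne y' y with rfl | hy'
    · exact h.exchange hH hxy hxz hyz hxz'.symm hyz'.symm
    · have h' := h.exchange hH hxy hxz hyz hxy'.symm hy'
      rw [Finset.pair_comm] at h'
      exact h'.exchange hH hxy' hxy hy' hxz'.symm hyz'.symm
  obtain ⟨σ, -, hσ, rfl⟩ := id hs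
  obtain ⟨p, q, r, hpq, hpr, hqr, hpqr⟩ := Finset.card_eq_three.1 hσ.card_support
  obtain ⟨a, b, c, hab, hac, hbc, rfl⟩ := Finset.card_eq_three.1 ht
  rw [hpqr] at hs
  by_cases hp : p = a ∨ p = b ∨ p = c
  · rcases hp with rfl | rfl | rfl
    · exact pivot hs hpq hpr hqr hab hac hbc
    · rw [Finset.insert_comm]; exact pivot hs hpq hpr hqr hab.symm hbc hac
    · rw [Finset.insert_comm, Finset.pair_comm, Finset.insert_comm]
      exact pivot hs hpq hpr hqr hbc.symm hac.symm hab.symm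
  · obtain ⟨hpa, hpb, hpc⟩ : p ≠ a ∧ p ≠ b ∧ p ≠ c := by simpa only [not_or] using hp
    have h := pivot hs hpq hpr hqr hpb hpc hbc
    rw [Finset.insert_comm, Finset.pair_comm] at h
    rw [Finset.insert_comm]
    exact pivot h hbc hpb.symm hpc.symm hab.symm hbc hac

end HasThreeCycleOn

namespace IsModularElement

theorem exists_hasThreeCycleOn_of_swap_mem (hH : IsModularElement H) (hα : 5 ≤ Fintype.card α)
    (hab : a ≠ b) (h : swap a b ∈ H) : ∃ s, HasThreeCycleOn H s := by
  obtain ⟨c, hca, hcb, -, -⟩ := Fintype.exists_ne_of_five_le_card hα a b a b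
  obtain ⟨d, hda, hdb, hdc, -⟩ := Fintype.exists_ne_of_five_le_card hα a b c c
  obtain ⟨e, hea, heb, hec, hed⟩ := Fintype.exists_ne_of_five_le_card hα a b c d
  have hcd := hH.swap_mem_of_swap_mem hab hca.symm hda.symm hcb.symm hdb.symm hdc.symm h
  have hbe := hH.swap_mem_of_swap_mem hdc.symm hcb hec.symm hdb hed.symm heb.symm hcd
  exact ⟨_, hasThreeCycleOn_of_swap_mul_swap_mem hab hea.symm heb.symm (mul_mem h hbe)⟩

theorem exists_hasThreeCycleOn_of_swap_mul_swap_mem (hH : IsModularElement H)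
    (hα : 5 ≤ Fintype.card α) {d : α} (hab : a ≠ b) (hac : a ≠ c) (had : a ≠ d)
    (h : swap a b * swap c d ∈ H) : ∃ s, HasThreeCycleOn H s := by
  obtain ⟨e, hea, heb, hec, hed⟩ := Fintype.exists_ne_of_five_le_card hα a b c d
  have hxa : (swap a b * swap c d) a = b := by simp [swap_apply_of_ne_of_ne hac had]
  have hxe : (swap a b * swap c d) e = e := by
    simp [swap_apply_of_ne_of_ne hec hed, swap_apply_of_ne_of_ne hea heb]
  rcases hH.hasThreeCycleOn_or_swap_mem h hea.symm hab heb (by rw [hxa, hxe, swap_comm])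
    with h' | h' | h'
  · exact ⟨_, h'⟩
  · exact hH.exists_hasThreeCycleOn_of_swap_mem hα hab h'
  · exact hH.exists_hasThreeCycleOn_of_swap_mem hα heb h'

theorem exists_hasThreeCycleOn (hH : IsModularElement H) (hα : 5 ≤ Fintype.card α)
    (hne : H ≠ ⊥) : ∃ s, HasThreeCycleOn H s := by
  obtain ⟨x, hxH, hx1⟩ := H.bot_or_exists_ne_one.resolve_left hne
  obtain ⟨a, ha⟩ : ∃ a, a ≠ x a := not_forall.1 fun h => hx1 (Equiv.ext fun a => (h a).symm)
  have hxa : x a ≠ x (x a) := fun h => ha (x.injective h)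
  by_cases hxxa : x (x a) = a
  · obtain ⟨c, hca, hcxa, -, -⟩ := Fintype.exists_ne_of_five_le_card hα a (x a) a (x a)
    by_cases hxc : x c = c
    · rcases hH.hasThreeCycleOn_or_swap_mem hxH hca.symm ha hcxa (by rw [hxc, swap_comm])
        with h | h | h
      · exact ⟨_, h⟩
      · exact hH.exists_hasThreeCycleOn_of_swap_mem hα ha h
      · exact hH.exists_hasThreeCycleOn_of_swap_mem hα hcxa h
    · have hxca : a ≠ x c := fun h => hcxa (x.injective (by rw [← h, hxxa]))
      rcases hH.swap_mem_or_mul_swap_mem hxH ha hca.symm hxca hcxa.symm (Ne.symm hxc) with h | h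
      · exact hH.exists_hasThreeCycleOn_of_swap_mem hα (fun h => hca (x.injective h).symm) h
      · exact hH.exists_hasThreeCycleOn_of_swap_mul_swap_mem hα hca.symm ha hxca h
  · rcases hH.hasThreeCycleOn_or_swap_mem hxH ha (Ne.symm hxxa) hxa rfl with h | h | h
    · exact ⟨_, h⟩
    · exact hH.exists_hasThreeCycleOn_of_swap_mem hα (Ne.symm hxxa) h
    · exact hH.exists_hasThreeCycleOn_of_swap_mem hα hxa h

theorem alternatingGroup_le (hH : IsModularElement H) (hα : 5 ≤ Fintype.card α)
    (hne : H ≠ ⊥) : alternatingGroup α ≤ H := by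
  obtain ⟨s, hs⟩ := hH.exists_hasThreeCycleOn hα hne
  rw [← closure_three_cycles_eq_alternating, closure_le]
  intro σ hσ
  exact (hs.of_card_eq_three hH hσ.card_support).mem hσ rfl

end IsModularElement

end Perm

/-- For `n ≥ 5`, a nontrivial modular element of the subgroup lattice of `Sₙ`
contains the alternating group `Aₙ`. -/
theorem modular_subgroup_of_Sn_ge_alternating (n : ℕ) (hn : 5 ≤ n)
    (H : Subgroup (Equiv.Perm (Fin n))) (hH : H ≠ ⊥)
    (hmod : ∀ y z : Subgroup (Equiv.Perm (Fin n)), y ≤ z → (H ⊔ y) ⊓ z = (H ⊓ z) ⊔ y) :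
    alternatingGroup (Fin n) ≤ H :=
  IsModularElement.alternatingGroup_le hmod (by simpa using hn) hH
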